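/- Let (X,d) be a metric space that is (θ,δ)-quasidoubling with constant C, let 0<r<1, and let {x_j}_{j∈J} be a subset of X with pairwise distances at least r. Then for every x∈X, the number of indices j∈J with d(x_j,x) ≤ r^θ is at most 3^δ C r^(δ(θ−1)). -/
import Mathlib


/-- `IsCoverBound r S m` : the set `S` can be covered by at most `m` closed balls of radius `r`. -/
def IsCoverBound {X : Type*} [MetricSpace X] (r : ℝ) (S : Set X) (m : ℝ) : Prop :=
  ∃ t : Finset X, S ⊆ (⋃ x ∈ t, Metric.closedBall x r) ∧ (t.card : ℝ) ≤ m

/-- In a `(θ,δ)`-quasidoubling space with constant `C`, if the points `x j` are `r`-separated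
then at most `3^δ * C * r^(δ*(θ-1))` of them lie within distance `r^θ` of any point `y`. -/
theorem quasidoubling_net_count {X : Type*} [MetricSpace X] {J : Type*} (θ δ C r : ℝ)
    (hθ : θ ∈ Set.Ioo (0:ℝ) 1) (hδ : 0 < δ) (hC : 0 < C) (hr : r ∈ Set.Ioo (0:ℝ) 1)
    (hQD : ∀ (R l : ℝ), 0 < R → R < 1 → 1 ≤ l → l * R < 1 → ∀ x₀ : X,
      IsCoverBound (R ^ (1 / θ)) (Metric.closedBall x₀ (l * R))
        (l ^ δ * C * R ^ ((1 - 1 / θ) * δ)))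
    (x : J → X) (hsep : ∀ i j : J, i ≠ j → r ≤ dist (x i) (x j)) (y : X) :
    {j : J | dist (x j) y ≤ r ^ θ}.Finite ∧
      ((Nat.card {j : J | dist (x j) y ≤ r ^ θ}) : ℝ) ≤ 3 ^ δ * C * r ^ (δ * (θ - 1)) := by
  obtain ⟨hθ0, hθ1⟩ := hθ
  obtain ⟨hr0, hr1⟩ := hr
  have h3 : (0:ℝ) < r / 3 := by linarith
  have hR0 : (0:ℝ) < (r/3) ^ θ := Real.rpow_pos_of_pos h3 θ
  have hR1 : (r/3) ^ θ < 1 := Real.rpow_lt_one h3.le (by linarith) hθ0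
  have hl1 : (1:ℝ) ≤ (3:ℝ) ^ θ := Real.one_le_rpow (by norm_num) hθ0.le
  have hlR : (3:ℝ) ^ θ * (r/3) ^ θ = r ^ θ := by
    rw [← Real.mul_rpow (by norm_num) h3.le]
    congr 1
    ring
  have hrθ1 : r ^ θ < 1 := Real.rpow_lt_one hr0.le hr1 hθ0
  have hRpow : ((r/3) ^ θ) ^ (1/θ) = r / 3 := by
    rw [← Real.rpow_mul h3.le, mul_one_div_cancel hθ0.ne', Real.rpow_one]
  have hbound : ((3:ℝ) ^ θ) ^ δ * C * ((r/3) ^ θ) ^ ((1 - 1/θ) * δ)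
      = 3 ^ δ * C * r ^ (δ * (θ - 1)) := by
    rw [← Real.rpow_mul (by norm_num : (0:ℝ) ≤ 3), ← Real.rpow_mul h3.le,
      Real.div_rpow hr0.le (by norm_num : (0:ℝ) ≤ 3)]
    have h1 : θ * ((1 - 1/θ) * δ) = δ * (θ - 1) := by field_simp
    rw [h1]
    rw [div_eq_mul_inv, ← Real.rpow_neg (by norm_num : (0:ℝ) ≤ 3)]
    have h2 : (3:ℝ) ^ (θ * δ) * 3 ^ (-(δ * (θ - 1))) = 3 ^ δ := by
      rw [← Real.rpow_add (by norm_num : (0:ℝ) < 3)]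
      congr 1
      ring
    rw [← h2]
    ring
  obtain ⟨t, hcov, hcard⟩ := hQD ((r/3) ^ θ) ((3:ℝ) ^ θ) hR0 hR1 hl1
    (by rw [hlR]; exact hrθ1) y
  rw [hlR, hRpow] at hcov
  rw [hbound] at hcard
  have key : ∀ j : {j : J // dist (x j) y ≤ r ^ θ}, ∃ c ∈ t, dist (x j.1) c ≤ r / 3 := by
    intro j
    have := hcov (Metric.mem_closedBall.mpr j.2)
    simpa only [Set.mem_iUnion, Metric.mem_closedBall, exists_prop] using this
  choose f hf hfd using key
  have hinj : Function.Injective f := by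
    intro i j hij
    by_contra hne
    have hsep' := hsep i.1 j.1 (fun h => hne (Subtype.ext h))
    have hd : dist (x i.1) (x j.1) ≤ r / 3 + r / 3 := by
      calc dist (x i.1) (x j.1) ≤ dist (x i.1) (f i) + dist (f i) (x j.1) := dist_triangle _ _ _
        _ = dist (x i.1) (f i) + dist (x j.1) (f j) := by rw [hij, dist_comm (f j)]
        _ ≤ r / 3 + r / 3 := add_le_add (hfd i) (hfd j)
    linarith
  have hfin : Finite {j : J // dist (x j) y ≤ r ^ θ} :=
    Finite.of_injective (fun j => (⟨f j, hf j⟩ : t)) fun a b h => hinj (Subtype.ext_iff.mp h)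
  refine ⟨Set.finite_coe_iff.mp hfin, ?_⟩
  have hle : Nat.card {j : J // dist (x j) y ≤ r ^ θ} ≤ Nat.card t :=
    Nat.card_le_card_of_injective (fun j => (⟨f j, hf j⟩ : t))
      (fun a b h => hinj (Subtype.ext_iff.mp h))
  have : Nat.card t = t.card := Nat.card_eq_finsetCard t
  calc ((Nat.card {j : J | dist (x j) y ≤ r ^ θ}) : ℝ)
      ≤ (t.card : ℝ) := by exact_mod_cast this ▸ hle
    _ ≤ 3 ^ δ * C * r ^ (δ * (θ - 1)) := hcard
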